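/- arXiv:1401.2192 — 10 statements merged into one kernel-verified Lean document; each statement's English description precedes it below -/
import Mathlib

section
/- (Nakayama's Lemma, general case) Let S be a monoid in which the unique maximal right ideal 𝔐 = {s ∈ S | st ≠ 1 for all t ∈ S} is a two-sided ideal. Let A be a right S-act and B a maximal subact of A such that there exists a ∈ A \ B with 𝔐 = {s ∈ S | a·s ∈ B}. Then for every proper right ideal I of S we have AI ≠ A. -/
/-- The set of right non-invertible elements of a monoid `S`:
`𝔐 = {s ∈ S | st ≠ 1 for all t ∈ S}`, the unique maximal right ideal of `S`. -/
def mSet (S : Type*) [Monoid S] : Set S := {s : S | ∀ t : S, s * t ≠ 1}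

/-- A subact of a right `S`-act `A` (with action `act`): a nonempty subset closed
under the action. -/
def IsSubact {S A : Type*} (act : A → S → A) (B : Set A) : Prop :=
  B.Nonempty ∧ ∀ b ∈ B, ∀ s : S, act b s ∈ B

/-- A maximal subact: a proper subact not properly contained in any proper subact. -/
def IsMaxSubact {S A : Type*} (act : A → S → A) (B : Set A) : Prop :=
  IsSubact act B ∧ B ≠ Set.univ ∧
    ∀ C : Set A, IsSubact act C → B ⊆ C → C ≠ Set.univ → C = B

/-- A right ideal of `S`: a nonempty subset `I` with `IS ⊆ I`. -/
def IsRightIdeal {S : Type*} [Monoid S] (I : Set S) : Prop :=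
  I.Nonempty ∧ ∀ s ∈ I, ∀ t : S, s * t ∈ I

/-- For a right `S`-act `A` and a subset `I ⊆ S`, `AI = {a·s | a ∈ A, s ∈ I}`. -/
def actSet {S A : Type*} (act : A → S → A) (I : Set S) : Set A :=
  {x : A | ∃ a : A, ∃ s ∈ I, act a s = x}

/-- **Nakayama's Lemma, general case.** Let `S` be a monoid (with at least one
right non-invertible element) in which the unique maximal right ideal `𝔐` is two-sided.
Let `A` be a right `S`-act and `B` a maximal subact of `A` such that there exists
`a ∈ A \ B` with `𝔐 = {s ∈ S | a·s ∈ B}`. Then for every proper right ideal `I` of `S`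
we have `AI ≠ A`. -/
theorem nakayama_general {S A : Type*} [Monoid S]
    (hex : ∃ s : S, ∀ t : S, s * t ≠ 1)
    (htwo : ∀ s ∈ mSet S, ∀ t : S, t * s ∈ mSet S)
    (act : A → S → A)
    (hact_one : ∀ a : A, act a 1 = a)
    (hact_mul : ∀ (a : A) (s t : S), act a (s * t) = act (act a s) t)
    (B : Set A) (hB : IsMaxSubact act B)
    (a : A) (haB : a ∉ B)
    (haM : {s : S | act a s ∈ B} = mSet S)
    (I : Set S) (hI : IsRightIdeal I) (hIproper : I ≠ Set.univ) :
    actSet act I ≠ Set.univ := by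
  intro hAI
  -- I ⊆ mSet S
  have hIM : I ⊆ mSet S := by
    intro s hs
    intro t h1
    apply hIproper
    ext u
    simp only [Set.mem_univ, iff_true]
    have : s * (t * u) ∈ I := hI.2 s hs (t * u)
    rwa [← mul_assoc, h1, one_mul] at this
  -- C = B ∪ orbit of a is a subact
  set C : Set A := B ∪ {x | ∃ t : S, act a t = x} with hC
  have hCsub : IsSubact act C := by
    constructor
    · exact ⟨a, Or.inr ⟨1, hact_one a⟩⟩
    · rintro b (hb | ⟨t, rfl⟩) s
      · exact Or.inl (hB.1.2 b hb s)
      · exact Or.inr ⟨t * s, (hact_mul a t s)⟩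
  have haC : a ∈ C := Or.inr ⟨1, hact_one a⟩
  have hCne : C ≠ B := fun h => haB (h ▸ haC)
  have hCuniv : C = Set.univ := by
    by_contra h
    exact hCne (hB.2.2 C hCsub Set.subset_union_left h)
  -- a ∈ A I
  have : a ∈ actSet act I := hAI ▸ Set.mem_univ a
  obtain ⟨x, s, hsI, hxs⟩ := this
  have hxC : x ∈ C := hCuniv ▸ Set.mem_univ x
  rcases hxC with hxB | ⟨t, rfl⟩
  · exact haB (hxs ▸ hB.1.2 x hxB s)
  · have hts : t * s ∈ mSet S := htwo s (hIM hsI) t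
    have : act a (t * s) ∈ B := by
      have := haM ▸ hts
      exact this
    rw [hact_mul, hxs] at this
    exact haB this
end

section
/- Let S be a monoid, A a right S-act with a maximal subact B, and a ∈ A \ B. Then 𝔐 = {s ∈ S | a·s ∈ B} if and only if for all s ∈ S, a·s = a implies s ∉ 𝔐, where 𝔐 = {s ∈ S | st ≠ 1 for all t ∈ S}. -/
/-- Let `S` be a monoid (with at least one right non-invertible element),
`A` a right `S`-act with a maximal subact `B`, and `a ∈ A \ B`. Then
`𝔐 = {s ∈ S | a·s ∈ B}` if and only if for all `s ∈ S`, `a·s = a` implies `s ∉ 𝔐`. -/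
theorem maxSubact_condition_iff {S A : Type*} [Monoid S]
    (hex : ∃ s : S, ∀ t : S, s * t ≠ 1)
    (act : A → S → A)
    (hact_one : ∀ a : A, act a 1 = a)
    (hact_mul : ∀ (a : A) (s t : S), act a (s * t) = act (act a s) t)
    (B : Set A) (hB : IsMaxSubact act B)
    (a : A) (haB : a ∉ B) :
    ({s : S | act a s ∈ B} = mSet S) ↔ (∀ s : S, act a s = a → s ∉ mSet S) := by
  obtain ⟨⟨hBne, hBcl⟩, hBproper, hBmax⟩ := hB
  constructor
  · intro h s hsa hsM
    have : s ∈ {s : S | act a s ∈ B} := by rw [h]; exact hsM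
    rw [Set.mem_setOf_eq, hsa] at this
    exact haB this
  · intro h
    apply Set.eq_of_subset_of_subset
    · intro s hs t hst
      apply haB
      have : act (act a s) t ∈ B := hBcl _ hs t
      rwa [← hact_mul, hst, hact_one] at this
    · intro s hsM
      -- consider C = B ∪ orbit of a·s
      set C : Set A := B ∪ {x | ∃ u : S, x = act a (s * u)} with hC
      have hCsub : IsSubact act C := by
        constructor
        · exact hBne.mono Set.subset_union_left
        · rintro b (hb | ⟨u, rfl⟩) v
          · exact Or.inl (hBcl _ hb v)
          · refine Or.inr ⟨u * v, ?_⟩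
            rw [← hact_mul, mul_assoc]
      by_cases hCuniv : C = Set.univ
      · exfalso
        have : a ∈ C := hCuniv ▸ Set.mem_univ a
        rcases this with ha | ⟨u, hu⟩
        · exact haB ha
        · have := h (s * u) hu.symm
          rw [mSet, Set.mem_setOf_eq] at this
          push_neg at this
          obtain ⟨t, ht⟩ := this
          exact hsM (u * t) (by rwa [← mul_assoc])
      · have hCB : C = B := hBmax C hCsub Set.subset_union_left hCuniv
        have : act a s ∈ C := Or.inr ⟨1, by rw [mul_one]⟩
        rwa [hCB] at this
end

section
/- Let S be a monoid in which the unique maximal right ideal 𝔐 = {s ∈ S | st ≠ 1 for all t ∈ S} is a two-sided ideal, and let A be a right S-act with a maximal subact B. If AI = A for some proper right ideal I of S, then for every a ∈ A \ B there exists m ∈ 𝔐 such that a·m = a. -/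
/-- Let `S` be a monoid (with at least one right non-invertible element)
in which the unique maximal right ideal `𝔐` is two-sided, and let `A` be a right `S`-act
with a maximal subact `B`. If `AI = A` for some proper right ideal `I` of `S`, then for
every `a ∈ A \ B` there exists `m ∈ 𝔐` such that `a·m = a`. -/
theorem exists_fixing_elem_of_actSet_eq {S A : Type*} [Monoid S]
    (hex : ∃ s : S, ∀ t : S, s * t ≠ 1)
    (htwo : ∀ s ∈ mSet S, ∀ t : S, t * s ∈ mSet S)
    (act : A → S → A)
    (hact_one : ∀ a : A, act a 1 = a)
    (hact_mul : ∀ (a : A) (s t : S), act a (s * t) = act (act a s) t)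
    (B : Set A) (hB : IsMaxSubact act B)
    (I : Set S) (hI : IsRightIdeal I) (hIproper : I ≠ Set.univ)
    (hAI : actSet act I = Set.univ) :
    ∀ a : A, a ∉ B → ∃ m ∈ mSet S, act a m = a := by
  intro a ha
  -- I ⊆ 𝔐
  have hIM : I ⊆ mSet S := by
    intro s hs t hst
    apply hIproper
    apply Set.eq_univ_of_forall
    intro u
    have : s * (t * u) ∈ I := hI.2 s hs (t * u)
    rwa [← mul_assoc, hst, one_mul] at this
  -- C = B ∪ {act a s | s}
  set C : Set A := B ∪ {x | ∃ s : S, act a s = x} with hC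
  have hCsub : IsSubact act C := by
    constructor
    · exact ⟨a, Or.inr ⟨1, hact_one a⟩⟩
    · rintro b (hb | ⟨s, rfl⟩) t
      · exact Or.inl (hB.1.2 b hb t)
      · exact Or.inr ⟨s * t, (hact_mul a s t)⟩
  have hCuniv : C = Set.univ := by
    by_contra h
    have := hB.2.2 C hCsub Set.subset_union_left h
    apply ha
    rw [← this]
    exact Or.inr ⟨1, hact_one a⟩
  -- a ∈ AI
  have : a ∈ actSet act I := by rw [hAI]; trivial
  obtain ⟨a₀, m, hm, hma⟩ := this
  have ha₀ : a₀ ∈ C := by rw [hCuniv]; trivial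
  rcases ha₀ with hb | ⟨s, rfl⟩
  · exact absurd (show a ∈ B from hma ▸ hB.1.2 a₀ hb m) ha
  · exact ⟨s * m, htwo m (hIM hm) s, by rw [hact_mul]; exact hma⟩
end

section
/- (Nakayama's Lemma, particular case) Let S be a monoid in which the unique maximal right ideal 𝔐 = {s ∈ S | st ≠ 1 for all t ∈ S} is a two-sided ideal. Let A be a finitely generated quasi-strongly faithful right S-act with a unique zero element θ. If AI = A for some proper right ideal I of S, then A = {θ}. -/
/-- **Nakayama's Lemma, particular case.** Let `S` be a monoid (with at least
one right non-invertible element) in which the unique maximal right ideal `𝔐` is two-sided.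
Let `A` be a finitely generated quasi-strongly faithful right `S`-act with a unique zero
element `θ`. If `AI = A` for some proper right ideal `I` of `S`, then `A = {θ}`. -/
theorem nakayama_particular {S A : Type*} [Monoid S]
    (hex : ∃ s : S, ∀ t : S, s * t ≠ 1)
    (htwo : ∀ s ∈ mSet S, ∀ t : S, t * s ∈ mSet S)
    (act : A → S → A)
    (hact_one : ∀ a : A, act a 1 = a)
    (hact_mul : ∀ (a : A) (s t : S), act a (s * t) = act (act a s) t)
    (θ : A) (hθ : ∀ s : S, act θ s = θ)
    (hθuniq : ∀ θ' : A, (∀ s : S, act θ' s = θ') → θ' = θ)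
    (hfg : ∃ X : Finset A, ∀ a : A, ∃ x ∈ X, ∃ s : S, act x s = a)
    (hqsf : ∀ (a : A) (s : S), a ≠ θ → act a s = a → s ∉ mSet S)
    (I : Set S) (hI : IsRightIdeal I) (hIproper : I ≠ Set.univ)
    (hAI : actSet act I = Set.univ) :
    ∀ a : A, a = θ := by
  intro a
  by_contra ha
  have hIM : I ⊆ mSet S := by
    intro s hs t hst
    apply hIproper
    ext u
    simp only [Set.mem_univ, iff_true]
    have h2 : s * (t * u) ∈ I := hI.2 s hs (t * u)
    rwa [← mul_assoc, hst, one_mul] at h2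
  have hMright : ∀ m ∈ mSet S, ∀ t : S, m * t ∈ mSet S := by
    intro m hm t u h
    exact hm (t * u) (by rwa [← mul_assoc])
  obtain ⟨X, hX⟩ := hfg
  have key : ∀ b : A, ∃ x ∈ X, ∃ m ∈ mSet S, act x m = b := by
    intro b
    have hb : b ∈ actSet act I := by rw [hAI]; trivial
    obtain ⟨c, i, hi, hci⟩ := hb
    obtain ⟨x, hx, s, hs⟩ := hX c
    exact ⟨x, hx, s * i, htwo i (hIM hi) s, by rw [hact_mul, hs, hci]⟩
  choose f hfX g hgM hfg2 using key
  set x : ℕ → A := fun n => f^[n] (f a) with hxdef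
  have hx0 : act (x 0) (g a) = a := hfg2 a
  have hsucc : ∀ n, x (n + 1) = f (x n) := by
    intro n
    simp only [hxdef, Function.iterate_succ_apply']
  have hstep : ∀ n, act (x (n + 1)) (g (x n)) = x n := by
    intro n
    rw [hsucc n]
    exact hfg2 (x n)
  have hxX : ∀ n, x n ∈ X := by
    intro n
    induction n with
    | zero => exact hfX a
    | succ k ih => rw [hsucc k]; exact hfX (x k)
  have hxne : ∀ n, x n ≠ θ := by
    intro n
    induction n with
    | zero => intro h; exact ha (by rw [← hx0, h, hθ])
    | succ k ih => intro h; exact ih (by rw [← hstep k, h, hθ])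
  have hchain : ∀ n k, ∃ q ∈ mSet S, act (x (n + k + 1)) q = x n := by
    intro n k
    induction k with
    | zero => exact ⟨g (x n), hgM (x n), hstep n⟩
    | succ j ih =>
      obtain ⟨q, hq, hq2⟩ := ih
      refine ⟨g (x (n + j + 1)) * q, hMright _ (hgM _) q, ?_⟩
      rw [show n + (j + 1) + 1 = (n + j + 1) + 1 by ring, hact_mul, hstep (n + j + 1), hq2]
  have hcontra : ∀ i j : ℕ, i < j → x i = x j → False := by
    intro i j hij hxij
    obtain ⟨q, hq, hq2⟩ := hchain i (j - i - 1)
    rw [show i + (j - i - 1) + 1 = j by omega] at hq2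
    exact hqsf (x i) q (hxne i) (by rw [hxij, hq2]; exact hxij) hq
  obtain ⟨i, hi, j, hj, hij, hxij⟩ := Finset.exists_ne_map_eq_of_card_lt_of_maps_to
    (s := Finset.range (X.card + 1)) (t := X) (by simp) (fun n _ => hxX n)
  rcases lt_or_gt_of_ne hij with h | h
  · exact hcontra i j h hxij
  · exact hcontra j i h hxij.symm
end

section
/- Let S be a monoid in which the unique maximal right ideal 𝔐 = {s ∈ S | st ≠ 1 for all t ∈ S} is a two-sided ideal, and let A be a right S-act having a maximal subact B such that there exists a ∈ A \ B with 𝔐 = {s ∈ S | a·s ∈ B}. Then for every proper right ideal I of S with I² = I, the S-acts AI and A are not isomorphic. -/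
/-- The subact `AI` of `A` is closed under the action (so the statement about the
`S`-act `AI` makes sense). -/
theorem actSet_closed {S A : Type*} [Monoid S] (act : A → S → A)
    (hact_mul : ∀ (a : A) (s t : S), act a (s * t) = act (act a s) t)
    (I : Set S) (hI : IsRightIdeal I) :
    ∀ x ∈ actSet act I, ∀ s : S, act x s ∈ actSet act I := by
  rintro x ⟨a, u, hu, rfl⟩ s
  exact ⟨a, u * s, hI.2 u hu s, (hact_mul a u s).symm ▸ rfl⟩

/-- Let `S` be a monoid (with at least one right non-invertible element)
in which the unique maximal right ideal `𝔐` is two-sided, and let `A` be a right `S`-act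
having a maximal subact `B` such that there exists `a ∈ A \ B` with
`𝔐 = {s ∈ S | a·s ∈ B}`. Then for every proper right ideal `I` of `S` with `I² = I`,
the `S`-acts `AI` and `A` are not isomorphic. -/
theorem actSet_not_iso {S A : Type*} [Monoid S]
    (hex : ∃ s : S, ∀ t : S, s * t ≠ 1)
    (htwo : ∀ s ∈ mSet S, ∀ t : S, t * s ∈ mSet S)
    (act : A → S → A)
    (hact_one : ∀ a : A, act a 1 = a)
    (hact_mul : ∀ (a : A) (s t : S), act a (s * t) = act (act a s) t)
    (B : Set A) (hB : IsMaxSubact act B)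
    (a : A) (haB : a ∉ B)
    (haM : {s : S | act a s ∈ B} = mSet S)
    (I : Set S) (hI : IsRightIdeal I) (hIproper : I ≠ Set.univ)
    (hI2 : {x : S | ∃ s ∈ I, ∃ t ∈ I, s * t = x} = I) :
    ¬ ∃ f : {x : A // x ∈ actSet act I} → A, Function.Bijective f ∧
        ∀ (x : A) (hx : x ∈ actSet act I) (s : S),
          f ⟨act x s, actSet_closed act hact_mul I hI x hx s⟩ = act (f ⟨x, hx⟩) s := by
  rintro ⟨f, hbij, hmul⟩
  -- I ⊆ mSet S
  have hIM : I ⊆ mSet S := by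
    intro s hs t hst
    apply hIproper
    ext u
    simp only [Set.mem_univ, iff_true]
    have h1 : s * (t * u) ∈ I := hI.2 s hs (t * u)
    rwa [← mul_assoc, hst, one_mul] at h1
  -- B ∪ aS = univ
  have hunion : B ∪ {x | ∃ s : S, act a s = x} = Set.univ := by
    by_contra h
    have hsub : IsSubact act (B ∪ {x | ∃ s : S, act a s = x}) := by
      constructor
      · exact ⟨a, Or.inr ⟨1, hact_one a⟩⟩
      · rintro b (hb | ⟨s, rfl⟩) t
        · exact Or.inl (hB.1.2 b hb t)
        · exact Or.inr ⟨s * t, hact_mul a s t⟩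
    have heq := hB.2.2 _ hsub Set.subset_union_left h
    have : a ∈ B := heq ▸ (Or.inr ⟨1, hact_one a⟩ : a ∈ B ∪ {x | ∃ s : S, act a s = x})
    exact haB this
  obtain ⟨x, hx⟩ := hbij.2 a
  obtain ⟨c, u, hu, hcu⟩ := x.2
  rw [← hI2] at hu
  obtain ⟨v, hv, w, hw, rfl⟩ := hu
  have hxval : (x : A) = act (act c v) w := by rw [← hcu, hact_mul]
  have hcvI : act c v ∈ actSet act I := ⟨c, v, hv, rfl⟩
  have key : a = act (f ⟨act c v, hcvI⟩) w := by
    rw [← hx]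
    have hxe : x = ⟨act (act c v) w, actSet_closed act hact_mul I hI _ hcvI w⟩ :=
      Subtype.ext hxval
    rw [hxe, hmul]
  set y := f ⟨act c v, hcvI⟩ with hy
  have hwM : w ∈ mSet S := hIM hw
  have hymem : y ∈ B ∪ {x | ∃ s : S, act a s = x} := hunion ▸ Set.mem_univ y
  rcases hymem with hyB | ⟨s, hs⟩
  · exact haB (key ▸ hB.1.2 y hyB w)
  · have hswM : s * w ∈ mSet S := htwo w hwM s
    have : s * w ∈ {s : S | act a s ∈ B} := haM ▸ hswM
    have haB' : act a (s * w) ∈ B := this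
    rw [hact_mul, hs, ← key] at haB'
    exact haB haB'
end

section
/- Let S be a monoid in which the unique maximal right ideal 𝔐 = {s ∈ S | st ≠ 1 for all t ∈ S} is a two-sided ideal, and let A be a right S-act having a maximal subact B such that there exists a ∈ A \ B with 𝔐 = {s ∈ S | a·s ∈ B}. Then for every right ideal I of S, AI = A if and only if I = S. -/
/-- Let `S` be a monoid (with at least one right non-invertible element)
in which the unique maximal right ideal `𝔐` is two-sided, and let `A` be a right `S`-act
having a maximal subact `B` such that there exists `a ∈ A \ B` with
`𝔐 = {s ∈ S | a·s ∈ B}`. Then for every right ideal `I` of `S`, `AI = A` iff `I = S`. -/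
theorem actSet_eq_univ_iff {S A : Type*} [Monoid S]
    (hex : ∃ s : S, ∀ t : S, s * t ≠ 1)
    (htwo : ∀ s ∈ mSet S, ∀ t : S, t * s ∈ mSet S)
    (act : A → S → A)
    (hact_one : ∀ a : A, act a 1 = a)
    (hact_mul : ∀ (a : A) (s t : S), act a (s * t) = act (act a s) t)
    (B : Set A) (hB : IsMaxSubact act B)
    (a : A) (haB : a ∉ B)
    (haM : {s : S | act a s ∈ B} = mSet S)
    (I : Set S) (hI : IsRightIdeal I) :
    actSet act I = Set.univ ↔ I = Set.univ := by
  constructor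
  · intro hAI
    by_contra hIne
    -- I ⊆ 𝔐
    have hIM : I ⊆ mSet S := by
      intro s hs t hst
      apply hIne
      have h1 : (1 : S) ∈ I := hst ▸ hI.2 s hs t
      ext u
      simp only [Set.mem_univ, iff_true]
      simpa using hI.2 1 h1 u
    -- C = B ∪ orbit of a is a subact properly containing B, hence C = univ
    have haC : a ∈ B ∪ {x | ∃ s : S, act a s = x} := Or.inr ⟨1, hact_one a⟩
    have hCsub : IsSubact act (B ∪ {x | ∃ s : S, act a s = x}) := by
      refine ⟨⟨a, haC⟩, ?_⟩
      rintro b (hb | ⟨s, rfl⟩) t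
      · exact Or.inl (hB.1.2 b hb t)
      · exact Or.inr ⟨s * t, hact_mul a s t⟩
    have hCuniv : B ∪ {x | ∃ s : S, act a s = x} = Set.univ := by
      by_contra h
      have := hB.2.2 _ hCsub Set.subset_union_left h
      exact haB (this ▸ haC)
    -- a ∈ AI
    have ha : a ∈ actSet act I := hAI ▸ Set.mem_univ a
    obtain ⟨x, s, hs, hxs⟩ := ha
    have hx : x ∈ B ∪ {x | ∃ s : S, act a s = x} := hCuniv ▸ Set.mem_univ x
    rcases hx with hxB | ⟨u, rfl⟩
    · exact haB (hxs ▸ hB.1.2 x hxB s)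
    · have hus : u * s ∈ mSet S := htwo s (hIM hs) u
      have : u * s ∈ {s : S | act a s ∈ B} := haM ▸ hus
      have : act a (u * s) ∈ B := this
      rw [hact_mul, hxs] at this
      exact haB this
  · intro h
    ext x
    simp only [Set.mem_univ, iff_true]
    exact ⟨x, 1, h ▸ Set.mem_univ 1, hact_one x⟩
end

section
/- Let S be a monoid in which the unique maximal right ideal 𝔐 = {s ∈ S | st ≠ 1 for all t ∈ S} is a two-sided ideal, and let A be a right S-act having a maximal subact B such that there exists a ∈ A \ B with 𝔐 = {s ∈ S | a·s ∈ B}. Then for every right ideal I of S with I² = I, the S-acts AI and A are isomorphic if and only if I = S. -/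
/-- Let `S` be a monoid (with at least one right non-invertible element)
in which the unique maximal right ideal `𝔐` is two-sided, and let `A` be a right `S`-act
having a maximal subact `B` such that there exists `a ∈ A \ B` with
`𝔐 = {s ∈ S | a·s ∈ B}`. Then for every right ideal `I` of `S` with `I² = I`, the
`S`-acts `AI` and `A` are isomorphic if and only if `I = S`. -/
theorem actSet_iso_iff {S A : Type*} [Monoid S]
    (hex : ∃ s : S, ∀ t : S, s * t ≠ 1)
    (htwo : ∀ s ∈ mSet S, ∀ t : S, t * s ∈ mSet S)
    (act : A → S → A)
    (hact_one : ∀ a : A, act a 1 = a)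
    (hact_mul : ∀ (a : A) (s t : S), act a (s * t) = act (act a s) t)
    (B : Set A) (hB : IsMaxSubact act B)
    (a : A) (haB : a ∉ B)
    (haM : {s : S | act a s ∈ B} = mSet S)
    (I : Set S) (hI : IsRightIdeal I)
    (hI2 : {x : S | ∃ s ∈ I, ∃ t ∈ I, s * t = x} = I) :
    (∃ f : {x : A // x ∈ actSet act I} → A, Function.Bijective f ∧
        ∀ (x : A) (hx : x ∈ actSet act I) (s : S),
          f ⟨act x s, actSet_closed act hact_mul I hI x hx s⟩ = act (f ⟨x, hx⟩) s) ↔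
      I = Set.univ := by
  constructor
  · rintro ⟨f, ⟨hinj, hsurj⟩, hcomm⟩
    by_contra hne
    -- I consists of right non-invertible elements
    have hIm : I ⊆ mSet S := by
      intro s hs t hst
      apply hne
      have h1 : (1 : S) ∈ I := hst ▸ hI.2 s hs t
      ext u
      simp only [Set.mem_univ, iff_true]
      simpa using hI.2 1 h1 u
    -- A = B ∪ aS
    have hC : (B ∪ {x | ∃ u : S, act a u = x}) = Set.univ := by
      by_contra hCne
      have hsub : IsSubact act (B ∪ {x | ∃ u : S, act a u = x}) := by
        constructor
        · exact ⟨a, Set.mem_union_right _ ⟨1, hact_one a⟩⟩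
        · rintro b (hb | ⟨u, rfl⟩) s
          · exact Set.mem_union_left _ (hB.1.2 b hb s)
          · exact Set.mem_union_right _ ⟨u * s, (hact_mul a u s)⟩
      have := hB.2.2 _ hsub Set.subset_union_left hCne
      exact haB (this ▸ Set.mem_union_right _ ⟨1, hact_one a⟩)
    -- A·I ⊆ B
    have hAI : ∀ z : A, ∀ s ∈ I, act z s ∈ B := by
      intro z s hs
      have hz : z ∈ B ∪ {x | ∃ u : S, act a u = x} := hC ▸ Set.mem_univ z
      rcases hz with hz | ⟨u, rfl⟩
      · exact hB.1.2 z hz s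
      · rw [← hact_mul]
        have hms : u * s ∈ mSet S := htwo s (hIm hs) u
        rw [← haM] at hms
        exact hms
    -- surjectivity gives x with f x = a
    obtain ⟨x, hx⟩ := hsurj a
    obtain ⟨y, s, hs, hys⟩ := x.2
    have hsI2 : s ∈ {x : S | ∃ s ∈ I, ∃ t ∈ I, s * t = x} := hI2.symm ▸ hs
    obtain ⟨s₁, hs₁, s₂, hs₂, hmul⟩ := hsI2
    have hmem : act y s₁ ∈ actSet act I := ⟨y, s₁, hs₁, rfl⟩
    have hx2 : (x : A) = act (act y s₁) s₂ := by rw [← hact_mul, hmul, hys]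
    have hxeq : x = ⟨act (act y s₁) s₂,
        actSet_closed act hact_mul I hI (act y s₁) hmem s₂⟩ := Subtype.ext hx2
    have hfx : f x = act (f ⟨act y s₁, hmem⟩) s₂ := by
      rw [hxeq]; exact hcomm (act y s₁) hmem s₂
    exact haB (hx ▸ hfx ▸ hAI _ s₂ hs₂)
  · intro hIuniv
    subst hIuniv
    refine ⟨fun x => x.1, ⟨fun x y h => Subtype.ext h,
      fun x => ⟨⟨x, ⟨x, 1, Set.mem_univ 1, hact_one x⟩⟩, rfl⟩⟩,
      fun x hx s => rfl⟩
end

section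
/- Let S be a commutative monoid. Then every projective right S-act is free if and only if E(S) = {1}, where E(S) is the set of idempotents of S. -/
universe u

/-- A (right) `S`-act: a set `A` with an action `a·s` satisfying `a·1 = a` and
`a·(st) = (a·s)·t`. -/
structure SAct (S : Type u) [Monoid S] : Type (u + 1) where
  carrier : Type u
  act : carrier → S → carrier
  act_one : ∀ a, act a 1 = a
  act_mul : ∀ a s t, act a (s * t) = act (act a s) t

/-- A morphism of `S`-acts: a map `f` with `f(a·s) = f(a)·s`. -/
def IsActHom {S : Type u} [Monoid S] (A B : SAct S) (f : A.carrier → B.carrier) : Prop :=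
  ∀ (a : A.carrier) (s : S), f (A.act a s) = B.act (f a) s

/-- An `S`-act `P` is projective if for every surjective `S`-act morphism `g : B → C` and
every `S`-act morphism `f : P → C` there is an `S`-act morphism `h : P → B` with
`g ∘ h = f`. -/
def IsProjectiveAct {S : Type u} [Monoid S] (P : SAct S) : Prop :=
  ∀ (B C : SAct S) (g : B.carrier → C.carrier), IsActHom B C g → Function.Surjective g →
    ∀ f : P.carrier → C.carrier, IsActHom P C f →
      ∃ h : P.carrier → B.carrier, IsActHom P B h ∧ g ∘ h = f

/-- An `S`-act `F` is free if it is isomorphic to a disjoint union (coproduct) of copies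
of the `S`-act `S` (here realized as `ι × S` with action `(i, x)·s = (i, x * s)`). -/
def IsFreeAct {S : Type u} [Monoid S] (F : SAct S) : Prop :=
  ∃ (ι : Type u) (f : F.carrier → ι × S), Function.Bijective f ∧
    ∀ (a : F.carrier) (s : S), f (F.act a s) = ((f a).1, (f a).2 * s)

/-!
For an idempotent `e`, the principal right ideal `eS` is projective: it is generated by `e`,
and `e` fixes every element of `eS`, so a lift of the image of `e` determines a lift of the
whole morphism. When `S` is commutative, `e` acts trivially on `eS`, whereas on a nonempty free
act only `1` acts trivially; so projective acts can only all be free if `e = 1`.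

Conversely, a projective act `P` is a retract of the free act `P × S` via `(p, s) ↦ p·s`;
write the section as `p ↦ (π p, σ p)`. For each `q` in the image of `π`, `σ q` is idempotent,
hence `1` when `E(S) = {1}`, and then `p ↦ (π p, σ p)` identifies `P` with the free act on the
image of `π`.
-/

namespace SAct

variable {S : Type u} [Monoid S]

/-- The act `{x | e * x = x}`, which is the principal right ideal `eS` when `e` is idempotent. -/
def principalIdeal (e : S) : SAct S where
  carrier := {x : S // e * x = x}
  act a s := ⟨a.1 * s, by rw [← mul_assoc, a.2]⟩
  act_one a := by simp
  act_mul a s t := by simp [mul_assoc]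

def freeOn (X : Type u) : SAct S where
  carrier := X × S
  act a s := (a.1, a.2 * s)
  act_one a := by simp
  act_mul a s t := by simp [mul_assoc]

end SAct

section

variable {S : Type u} [Monoid S]

open SAct

theorem isProjectiveAct_principalIdeal {e : S} (he : e * e = e) :
    IsProjectiveAct (principalIdeal e) := by
  intro B C g hg hg_surj f hf
  let gen : (principalIdeal e).carrier := ⟨e, he⟩
  obtain ⟨b, hb⟩ := hg_surj (f gen)
  refine ⟨fun a => B.act b a.1, fun a s => B.act_mul b a.1 s, funext fun a => ?_⟩
  have ha : (principalIdeal e).act gen a.1 = a := Subtype.ext a.2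
  calc g (B.act b a.1) = C.act (f gen) a.1 := by rw [hg, hb]
    _ = f a := by rw [← hf, ha]

theorem IsFreeAct.eq_one_of_forall_act_eq_self {F : SAct S} (hF : IsFreeAct F)
    (hne : Nonempty F.carrier) {e : S} (he : ∀ a, F.act a e = a) : e = 1 := by
  obtain ⟨ι, f, hf_bij, hf_act⟩ := hF
  obtain ⟨p⟩ := hne
  obtain ⟨q, hq⟩ := hf_bij.2 ((f p).1, 1)
  have := hf_act q e
  rw [he, hq] at this
  simpa using (congrArg Prod.snd this).symm

theorem isActHom_freeOn_eval (P : SAct S) :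
    IsActHom (freeOn P.carrier) P (fun a => P.act a.1 a.2) :=
  fun a s => P.act_mul a.1 a.2 s

theorem IsProjectiveAct.exists_section {P : SAct S} (hP : IsProjectiveAct P) :
    ∃ h : P.carrier → P.carrier × S, IsActHom P (freeOn P.carrier) h ∧
      ∀ p, P.act (h p).1 (h p).2 = p := by
  obtain ⟨h, hh, hgh⟩ := hP (freeOn P.carrier) P _ (isActHom_freeOn_eval P)
    (fun p => ⟨(p, 1), P.act_one p⟩) id (fun _ _ => rfl)
  exact ⟨h, hh, congrFun hgh⟩

theorem isFreeAct_of_section (hE : ∀ e : S, e * e = e → e = 1) {P : SAct S}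
    {h : P.carrier → P.carrier × S} (hh : IsActHom P (freeOn P.carrier) h)
    (hgh : ∀ p, P.act (h p).1 (h p).2 = p) : IsFreeAct P := by
  have hfst : ∀ p s, (h (P.act p s)).1 = (h p).1 := fun p s => by rw [hh p s]; rfl
  have hsnd : ∀ p s, (h (P.act p s)).2 = (h p).2 * s := fun p s => by rw [hh p s]; rfl
  have hfst_fst : ∀ p, (h (h p).1).1 = (h p).1 := fun p => by
    conv_rhs => rw [← hgh p, hfst]
  have hsnd_eq_one : ∀ q, (h q).1 = q → (h q).2 = 1 := fun q hq => by
    have hq_fix : P.act q (h q).2 = q := by simpa [hq] using hgh q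
    apply hE
    simpa [hq_fix] using (hsnd q (h q).2).symm
  refine ⟨{q // (h q).1 = q}, fun p => (⟨(h p).1, hfst_fst p⟩, (h p).2), ⟨?_, ?_⟩, ?_⟩
  · intro p p' hpp'
    simp only [Prod.mk.injEq, Subtype.mk.injEq] at hpp'
    rw [← hgh p, ← hgh p', hpp'.1, hpp'.2]
  · rintro ⟨⟨q, hq⟩, s⟩
    refine ⟨P.act q s, Prod.ext (Subtype.ext ?_) ?_⟩
    · exact (hfst q s).trans hq
    · simp [hsnd, hsnd_eq_one q hq]
  · intro p s
    exact Prod.ext (Subtype.ext (hfst p s)) (hsnd p s)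

theorem IsProjectiveAct.isFreeAct (hE : ∀ e : S, e * e = e → e = 1) {P : SAct S}
    (hP : IsProjectiveAct P) : IsFreeAct P := by
  obtain ⟨h, hh, hgh⟩ := hP.exists_section
  exact isFreeAct_of_section hE hh hgh

end

/-- Let `S` be a commutative monoid. Then every projective right `S`-act
is free if and only if `E(S) = {1}`, where `E(S)` is the set of idempotents of `S`. -/
theorem projective_free_iff_idempotents {S : Type u} [CommMonoid S] :
    (∀ P : SAct S, IsProjectiveAct P → IsFreeAct P) ↔
      ({e : S | e * e = e} = {1}) := by
  constructor
  · intro H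
    ext e
    refine ⟨fun (he : e * e = e) => ?_, fun he => ?_⟩
    · have h_fixes : ∀ a, (SAct.principalIdeal e).act a e = a := fun a =>
        Subtype.ext ((mul_comm a.1 e).trans a.2)
      exact (H _ (isProjectiveAct_principalIdeal he)).eq_one_of_forall_act_eq_self
        ⟨⟨e, he⟩⟩ h_fixes
    · rw [Set.mem_singleton_iff.1 he]
      exact one_mul 1
  · intro hE P hP
    exact hP.isFreeAct fun e he => show e ∈ ({1} : Set S) from hE ▸ he
end

section
/- Let S be a monoid with a unique zero element in which every nonzero element is invertible, and let A be a finitely generated right S-act. If X and Y are any two minimal generating sets of A, then |X| = |Y|. -/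
/-- A subset `X` of a right `S`-act `A` generates `A` if `A = {x·s | x ∈ X, s ∈ S}`. -/
def Generates {S A : Type*} (act : A → S → A) (X : Set A) : Prop :=
  ∀ a : A, ∃ x ∈ X, ∃ s : S, act x s = a

/-- `X` is a minimal generating set of `A` if it generates `A` and no proper subset of `X`
generates `A`. -/
def IsMinGenSet {S A : Type*} (act : A → S → A) (X : Set A) : Prop :=
  Generates act X ∧ ∀ X' : Set A, X' ⊂ X → ¬ Generates act X'

/-- Let `S` be a monoid with a unique zero element in which every nonzero
element is invertible, and let `A` be a finitely generated right `S`-act. If `X` and `Y`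
are any two minimal generating sets of `A`, then `|X| = |Y|`. -/
theorem minGenSets_same_card {S A : Type*} [Monoid S]
    (z : S) (hz : ∀ s : S, z * s = z) (hz' : ∀ s : S, s * z = z)
    (hinv : ∀ s : S, s ≠ z → ∃ t : S, s * t = 1 ∧ t * s = 1)
    (act : A → S → A)
    (hact_one : ∀ a : A, act a 1 = a)
    (hact_mul : ∀ (a : A) (s t : S), act a (s * t) = act (act a s) t)
    (hfg : ∃ X : Finset A, Generates act (X : Set A))
    (X Y : Set A) (hX : IsMinGenSet act X) (hY : IsMinGenSet act Y) :
    Cardinal.mk X = Cardinal.mk Y := by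
  classical
  -- reachability composes
  have comp : ∀ a b c : A, (∃ s, act a s = b) → (∃ t, act b t = c) →
      ∃ u, act a u = c := by
    rintro a b c ⟨s, hs⟩ ⟨t, ht⟩
    exact ⟨s * t, by rw [hact_mul, hs, ht]⟩
  -- in a minimal generating set, no element reaches a different element
  have key : ∀ (W : Set A), IsMinGenSet act W → ∀ w ∈ W, ∀ w' ∈ W,
      (∃ s, act w s = w') → w = w' := by
    rintro W hW w hw w' hw' ⟨s, hs⟩
    by_contra hne
    refine hW.2 (W \ {w'}) (Set.sdiff_singleton_ssubset.mpr hw') ?_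
    intro a
    obtain ⟨x, hx, t, ht⟩ := hW.1 a
    by_cases hxx : x = w'
    · exact ⟨w, ⟨hw, hne⟩, s * t, by rw [hact_mul, hs, ← hxx, ht]⟩
    · exact ⟨x, ⟨hx, hxx⟩, t, ht⟩
  -- each element of a minimal generating set is mutually reachable with an
  -- element of any other minimal generating set
  have transfer : ∀ (W V : Set A), IsMinGenSet act W → IsMinGenSet act V →
      ∀ x ∈ W, ∃ y ∈ V, (∃ s, act x s = y) ∧ (∃ t, act y t = x) := by
    intro W V hW hV x hx
    obtain ⟨y, hy, s, hs⟩ := hV.1 x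
    by_cases hsz : s = z
    · rw [hsz] at hs
      obtain ⟨x', hx', t, ht⟩ := hW.1 y
      by_cases htz : t = z
      · rw [htz] at ht
        have h1 : act y z = y := by rw [← ht, ← hact_mul, hz z]
        have hxy : x = y := by rw [← hs, h1]
        exact ⟨y, hy, ⟨1, by rw [hact_one, hxy]⟩, ⟨1, by rw [hact_one, hxy]⟩⟩
      · have hreach : ∃ u, act x' u = x := ⟨z, by rw [← hz' t, hact_mul, ht, hs]⟩
        have hx'x : x' = x := key W hW x' hx' x hx hreach
        exact ⟨y, hy, ⟨t, by rw [← hx'x, ht]⟩, ⟨z, hs⟩⟩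
    · obtain ⟨t, hst, hts⟩ := hinv s hsz
      refine ⟨y, hy, ⟨t, ?_⟩, ⟨s, hs⟩⟩
      rw [← hs, ← hact_mul, hst, hact_one]
  -- uniqueness of the mutual partner
  have uniq : ∀ (V : Set A), IsMinGenSet act V → ∀ x : A, ∀ y ∈ V, ∀ y' ∈ V,
      (∃ s, act y s = x) → (∃ s, act x s = y') → y = y' := by
    intro V hV x y hy y' hy' h1 h2
    exact key V hV y hy y' hy' (comp y x y' h1 h2)
  -- build the bijection
  have hXm : IsMinGenSet act X := hX
  have hYm : IsMinGenSet act Y := hY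
  choose f hfY hf1 hf2 using fun x : X => transfer X Y hXm hYm x.1 x.2
  have hbij : Function.Bijective (fun x : X => (⟨f x, hfY x⟩ : Y)) := by
    constructor
    · intro x₁ x₂ h
      have h' : f x₁ = f x₂ := congrArg Subtype.val h
      -- x₁ reaches f x₁ = f x₂ reaches x₂
      have : ∃ u, act x₁.1 u = x₂.1 :=
        comp x₁.1 (f x₁) x₂.1 (hf1 x₁) (h' ▸ hf2 x₂)
      exact Subtype.ext (key X hXm x₁.1 x₁.2 x₂.1 x₂.2 this)
    · intro y
      obtain ⟨x, hxX, hyx, hxy⟩ := transfer Y X hYm hXm y.1 y.2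
      refine ⟨⟨x, hxX⟩, Subtype.ext ?_⟩
      -- f ⟨x,_⟩ and y are both in Y, mutually reachable with x
      refine uniq Y hYm x (f ⟨x, hxX⟩) (hfY ⟨x, hxX⟩) y.1 y.2 (hf2 ⟨x, hxX⟩) hxy
  exact Cardinal.mk_congr (Equiv.ofBijective _ hbij)
end

section
/- Let S be a monoid, A a right S-act, and B a subact of A. Then A is Noetherian if and only if both B and the Rees factor act A/B are Noetherian. -/
/-- A right `S`-act is Noetherian if it satisfies the ascending chain condition on its
subacts: every ascending chain of subacts eventually stabilizes. -/
def IsNoetherianAct {S A : Type*} (act : A → S → A) : Prop :=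
  ∀ c : ℕ → Set A, (∀ n, IsSubact act (c n)) → (∀ n, c n ⊆ c (n + 1)) →
    ∃ N, ∀ n, N ≤ n → c n = c N

/-- The Rees congruence on `A` induced by a subset `B ⊆ A`: all elements of `B` are
identified (to a single zero class), all other classes are singletons. -/
def reesSetoid {A : Type*} (B : Set A) : Setoid A where
  r x y := x = y ∨ (x ∈ B ∧ y ∈ B)
  iseqv := by
    refine ⟨fun x => Or.inl rfl, ?_, ?_⟩
    · rintro x y (rfl | ⟨hx, hy⟩)
      · exact Or.inl rfl
      · exact Or.inr ⟨hy, hx⟩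
    · rintro x y z (rfl | ⟨hx, hy⟩) (rfl | ⟨hy', hz⟩)
      · exact Or.inl rfl
      · exact Or.inr ⟨hy', hz⟩
      · exact Or.inr ⟨hx, hy⟩
      · exact Or.inr ⟨hx, hz⟩

/-- The induced action of `S` on the Rees factor act `A/B`, for a subact `B` of `A`. -/
def reesAct {S A : Type*} (act : A → S → A) (B : Set A)
    (hB : ∀ b ∈ B, ∀ s : S, act b s ∈ B) :
    Quotient (reesSetoid B) → S → Quotient (reesSetoid B) := fun c s =>
  Quotient.liftOn c (fun a => Quotient.mk (reesSetoid B) (act a s))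
    (fun a b hab => by
      have h : a = b ∨ (a ∈ B ∧ b ∈ B) := hab
      rcases h with rfl | ⟨ha, hb⟩
      · rfl
      · exact Quotient.sound (Or.inr ⟨hB a ha s, hB b hb s⟩))

/-- The induced action of `S` on a subact `B` of `A`. -/
def subAct {S A : Type*} (act : A → S → A) (B : Set A)
    (hB : ∀ b ∈ B, ∀ s : S, act b s ∈ B) : B → S → B :=
  fun b s => ⟨act b.1 s, hB b.1 b.2 s⟩

/-!
A subact and a quotient of a Noetherian act are Noetherian: a chain of subacts of `B` pushes
forward injectively along the inclusion `B → A`, and a chain of subacts of `A/B` pulls back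
injectively along the surjection `A → A/B`. Conversely, the Rees congruence identifies only
elements of `B`, so a chain `c` of subacts of `A` is determined by its image in `A/B` together
with its traces `c n ∩ B`. Both stabilize, the traces because they form an ascending chain of
subacts of `B` once they are nonempty.
-/

section Equivariant

variable {S X A : Type*} {actX : X → S → X} {act : A → S → A} {f : X → A}

lemma IsSubact.image (hf : ∀ x s, f (actX x s) = act (f x) s) {C : Set X}
    (hC : IsSubact actX C) : IsSubact act (f '' C) := by
  refine ⟨hC.1.image f, ?_⟩
  rintro _ ⟨x, hx, rfl⟩ s
  exact ⟨actX x s, hC.2 x hx s, hf x s⟩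

lemma IsSubact.preimage (hf : ∀ x s, f (actX x s) = act (f x) s)
    (hsurj : Function.Surjective f) {C : Set A} (hC : IsSubact act C) :
    IsSubact actX (f ⁻¹' C) := by
  refine ⟨hC.1.preimage hsurj, fun x hx s => ?_⟩
  rw [Set.mem_preimage, hf]
  exact hC.2 _ hx s

lemma IsNoetherianAct.of_injective (hf : ∀ x s, f (actX x s) = act (f x) s)
    (hinj : Function.Injective f) (h : IsNoetherianAct act) : IsNoetherianAct actX := by
  intro c hc hmono
  obtain ⟨N, hN⟩ := h (fun n => f '' c n) (fun n => (hc n).image hf)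
    (fun n => Set.image_mono (hmono n))
  exact ⟨N, fun n hn => Set.image_injective.mpr hinj (hN n hn)⟩

lemma IsNoetherianAct.of_surjective (hf : ∀ x s, f (actX x s) = act (f x) s)
    (hsurj : Function.Surjective f) (h : IsNoetherianAct actX) : IsNoetherianAct act := by
  intro c hc hmono
  obtain ⟨N, hN⟩ := h (fun n => f ⁻¹' c n) (fun n => (hc n).preimage hf hsurj)
    (fun n => Set.preimage_mono (hmono n))
  exact ⟨N, fun n hn => Set.preimage_injective.mpr hsurj (hN n hn)⟩

end Equivariant

lemma IsNoetherianAct.exists_eq_of_closed {S A : Type*} {act : A → S → A}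
    (h : IsNoetherianAct act) {c : ℕ → Set A} (hc : ∀ n, ∀ a ∈ c n, ∀ s, act a s ∈ c n)
    (hmono : Monotone c) : ∃ N, ∀ n, N ≤ n → c n = c N := by
  by_cases hne : ∃ n₀, (c n₀).Nonempty
  · obtain ⟨n₀, hn₀⟩ := hne
    obtain ⟨N, hN⟩ := h (fun n => c (n₀ + n))
      (fun n => ⟨hn₀.mono (hmono (Nat.le_add_right _ _)), hc _⟩) (fun n => hmono (by omega))
    refine ⟨n₀ + N, fun n hn => ?_⟩
    obtain ⟨k, rfl⟩ := Nat.exists_eq_add_of_le (le_of_add_le_left hn)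
    exact hN k (by omega)
  · simp only [not_exists, Set.not_nonempty_iff_eq_empty] at hne
    exact ⟨0, fun n _ => by rw [hne n, hne 0]⟩

lemma eq_of_subset_of_reesImage_eq {A : Type*} {B s t : Set A} (hst : s ⊆ t)
    (himage : Quotient.mk (reesSetoid B) '' s = Quotient.mk (reesSetoid B) '' t)
    (hB : t ∩ B ⊆ s) : s = t := by
  refine hst.antisymm fun a ha => ?_
  obtain ⟨a', ha', heq⟩ : Quotient.mk (reesSetoid B) a ∈ Quotient.mk (reesSetoid B) '' s :=
    himage ▸ ⟨a, ha, rfl⟩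
  rcases (Quotient.exact heq : a' = a ∨ (a' ∈ B ∧ a ∈ B)) with rfl | ⟨-, haB⟩
  · exact ha'
  · exact hB ⟨ha, haB⟩

lemma IsNoetherianAct.of_subAct_of_reesAct {S A : Type*} {act : A → S → A} {B : Set A}
    (hBcl : ∀ b ∈ B, ∀ s : S, act b s ∈ B) (hB : IsNoetherianAct (subAct act B hBcl))
    (hQ : IsNoetherianAct (reesAct act B hBcl)) : IsNoetherianAct act := by
  intro c hc hsucc
  have hmono : Monotone c := monotone_nat_of_le_succ hsucc
  obtain ⟨N₁, hN₁⟩ := hB.exists_eq_of_closed (c := fun n => (Subtype.val ⁻¹' c n : Set B))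
    (fun n _ hb s => (hc n).2 _ hb s) (fun _ _ h => Set.preimage_mono (hmono h))
  obtain ⟨N₂, hN₂⟩ := hQ (fun n => Quotient.mk (reesSetoid B) '' c n)
    (fun n => (hc n).image fun _ _ => rfl) (fun n => Set.image_mono (hsucc n))
  refine ⟨max N₁ N₂, fun n hn => (eq_of_subset_of_reesImage_eq (B := B) (hmono hn) ?_ ?_).symm⟩
  · rw [hN₂ n (le_of_max_le_right hn), hN₂ _ (le_max_right _ _)]
  · rintro a ⟨ha, haB⟩
    have hmem : (⟨a, haB⟩ : B) ∈ (Subtype.val ⁻¹' c n : Set B) := ha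
    rw [hN₁ n (le_of_max_le_left hn), ← hN₁ _ (le_max_left _ _)] at hmem
    exact hmem

theorem noetherian_iff_subact_and_rees_factor_general {S A : Type*}
    (act : A → S → A)
    (B : Set A) (hBcl : ∀ b ∈ B, ∀ s : S, act b s ∈ B) :
    IsNoetherianAct act ↔
      IsNoetherianAct (subAct act B hBcl) ∧
        IsNoetherianAct (reesAct act B hBcl) :=
  ⟨fun hA => ⟨hA.of_injective (fun _ _ => rfl) Subtype.val_injective,
      hA.of_surjective (fun _ _ => rfl) Quotient.mk_surjective⟩,
    fun ⟨hB, hQ⟩ => .of_subAct_of_reesAct hBcl hB hQ⟩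

/-- Let `S` be a monoid, `A` a right `S`-act and `B` a subact of `A`.
Then `A` is Noetherian if and only if both `B` and the Rees factor act `A/B` are
Noetherian. -/
theorem noetherian_iff_subact_and_rees_factor {S A : Type*} [Monoid S]
    (act : A → S → A)
    (hact_one : ∀ a : A, act a 1 = a)
    (hact_mul : ∀ (a : A) (s t : S), act a (s * t) = act (act a s) t)
    (B : Set A) (hBne : B.Nonempty) (hBcl : ∀ b ∈ B, ∀ s : S, act b s ∈ B) :
    IsNoetherianAct act ↔
      IsNoetherianAct (subAct act B hBcl) ∧
        IsNoetherianAct (reesAct act B hBcl) :=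
  noetherian_iff_subact_and_rees_factor_general act B hBcl
end
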